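/- arXiv:math/0210373 — 5 statements merged into one kernel-verified Lean document; each statement's English description precedes it below -/
import Mathlib

section
/- Let G be a finite group with subgroups K ⊴ L ≤ H ≤ G such that the quotient L/K contains elements not of prime power order of two different orders. Then H contains elements not of prime power order of two different orders. -/
/-- `g` is not of prime power order (order `p^k`, `k ≥ 0`, includes order 1). -/
def nppElt {G : Type*} [Group G] (g : G) : Prop :=
  orderOf g ≠ 1 ∧ ¬ IsPrimePow (orderOf g)

theorem stmt2 {G : Type*} [Group G] [Finite G] (K L H : Subgroup G)
    (hKL : K ≤ L) (hLH : L ≤ H) [(K.subgroupOf L).Normal]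
    (h : ∃ a b : L ⧸ (K.subgroupOf L),
      nppElt a ∧ nppElt b ∧ orderOf a ≠ orderOf b) :
    ∃ a b : H, nppElt a ∧ nppElt b ∧ orderOf a ≠ orderOf b := by
  -- Key: every element of the quotient has a "lift" in H of the same order.
  have key : ∀ a : L ⧸ (K.subgroupOf L), ∃ z : H, orderOf z = orderOf a := by
    intro a
    obtain ⟨x, rfl⟩ := QuotientGroup.mk_surjective a
    have hd : orderOf ((x : L ⧸ (K.subgroupOf L))) ∣ orderOf x :=
      orderOf_map_dvd (QuotientGroup.mk' (K.subgroupOf L)) x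
    have hx0 : orderOf x ≠ 0 := (orderOf_pos x).ne'
    refine ⟨(⟨(x : G), hLH x.2⟩ : H) ^ (orderOf x / orderOf ((x : L ⧸ (K.subgroupOf L)))), ?_⟩
    have hxo : orderOf (⟨(x : G), hLH x.2⟩ : H) = orderOf x := by
      rw [Subgroup.orderOf_mk, ← Subgroup.orderOf_coe x]
    rw [← hxo] at hd hx0 ⊢
    exact orderOf_pow_orderOf_div hx0 hd
  obtain ⟨a, b, ha, hb, hab⟩ := h
  obtain ⟨za, hza⟩ := key a
  obtain ⟨zb, hzb⟩ := key b
  exact ⟨za, zb, by rwa [nppElt, hza], by rwa [nppElt, hzb], by rw [hza, hzb]; exact hab⟩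
end

section
/- Let G be a finite group of odd order, H ⊴ G, p a prime, P an abelian p-subgroup of H with P ⊴ G, q a prime distinct from p, and x ∈ H an element of order q with V = C_P(x) ≠ 1. Suppose every two elements of G of order pq are real conjugate in G. Then the centralizer C_G(x) acts transitively on the set Vx \ {x} = {vx : v ∈ V, v ≠ 1}, and this leads to a contradiction since |V| − 1 is even while |C_G(x)| is odd; hence not all elements of G of order pq are real conjugate in G. -/
/-!
Pick `v ∈ C_P(x)` of order `p`. Then `v * x` and `v⁻¹ * x` both have order `p * q`, and a
conjugation carrying one to the other, or to the inverse of the other, respects the unique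
decomposition of an element of order `p * q` into commuting parts of orders `p` and `q`. It would
therefore make `v` conjugate to `v⁻¹`, or `x⁻¹` conjugate to `x`; in a group of odd order this
forces the element to be trivial, since an element conjugated to its inverse by `c` is centralized
by `c ^ 2`, hence by `c`.
-/

/-- Two elements are *real conjugate* if `g` or `g⁻¹` is conjugate to `h`. -/
def realConj {G : Type*} [Group G] (g h : G) : Prop := IsConj g h ∨ IsConj g⁻¹ h

section OddOrder

variable {G : Type*} [Group G]

theorem exists_sq_pow_eq_self_of_odd_card (hodd : Odd (Nat.card G)) (g : G) :
    ∃ m : ℕ, (g ^ 2) ^ m = g :=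
  exists_pow_eq_self_of_coprime <|
    Nat.coprime_two_left.mpr (hodd.of_dvd_nat (orderOf_dvd_natCard g))

theorem eq_one_of_isConj_inv_of_odd_card (hodd : Odd (Nat.card G)) {g : G}
    (h : IsConj g g⁻¹) : g = 1 := by
  obtain ⟨c, hc⟩ := isConj_iff.mp h
  replace hc : MulAut.conj c g = g⁻¹ := hc
  have hc2 : MulAut.conj (c ^ 2) g = g := by
    rw [map_pow, pow_two, MulAut.mul_apply, hc, map_inv, hc, inv_inv]
  obtain ⟨m, hm⟩ := exists_sq_pow_eq_self_of_odd_card hodd c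
  have hcg : Commute c g := by
    rw [← hm]
    refine Commute.pow_left ?_ m
    rwa [MulAut.conj_apply, mul_inv_eq_iff_eq_mul] at hc2
  have hg2 : g ^ 2 = 1 := by
    rw [MulAut.conj_apply, hcg.eq, mul_inv_cancel_right] at hc
    rw [pow_two, ← mul_inv_cancel g, ← hc]
  obtain ⟨k, hk⟩ := exists_sq_pow_eq_self_of_odd_card hodd g
  rw [← hk, hg2, one_pow]

end OddOrder

namespace Commute

variable {G : Type*} [Group G]

theorem exists_pow_mul_eq_right {n m : ℕ} (hnm : n.Coprime m) :
    ∃ k : ℕ, ∀ {a b : G}, Commute a b → a ^ n = 1 → b ^ m = 1 → (a * b) ^ k = b := by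
  obtain ⟨k, hkn, hkm⟩ := Nat.chineseRemainder hnm 0 1
  refine ⟨k, fun {a b} hab ha hb => ?_⟩
  obtain ⟨j, rfl⟩ := Nat.modEq_zero_iff_dvd.mp hkn
  rw [hab.mul_pow, pow_mul, ha, one_pow, one_mul]
  exact (pow_eq_pow_iff_modEq.mpr (hkm.of_dvd (orderOf_dvd_of_pow_eq_one hb))).trans (pow_one b)

theorem eq_and_eq_of_mul_eq_mul {n m : ℕ} (hnm : n.Coprime m) {a₁ b₁ a₂ b₂ : G}
    (h₁ : Commute a₁ b₁) (h₂ : Commute a₂ b₂) (ha₁ : a₁ ^ n = 1) (ha₂ : a₂ ^ n = 1)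
    (hb₁ : b₁ ^ m = 1) (hb₂ : b₂ ^ m = 1) (h : a₁ * b₁ = a₂ * b₂) : a₁ = a₂ ∧ b₁ = b₂ := by
  obtain ⟨k, hk⟩ := exists_pow_mul_eq_right (G := G) hnm
  have hb : b₁ = b₂ := by rw [← hk h₁ ha₁ hb₁, ← hk h₂ ha₂ hb₂, h]
  exact ⟨mul_right_cancel (hb ▸ h), hb⟩

theorem isConj_and_isConj_of_isConj_mul {n m : ℕ} (hnm : n.Coprime m) {a₁ b₁ a₂ b₂ : G}
    (h₁ : Commute a₁ b₁) (h₂ : Commute a₂ b₂) (ha₁ : a₁ ^ n = 1) (ha₂ : a₂ ^ n = 1)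
    (hb₁ : b₁ ^ m = 1) (hb₂ : b₂ ^ m = 1) (h : IsConj (a₁ * b₁) (a₂ * b₂)) :
    IsConj a₁ a₂ ∧ IsConj b₁ b₂ := by
  obtain ⟨c, hc⟩ := isConj_iff.mp h
  replace hc : MulAut.conj c a₁ * MulAut.conj c b₁ = a₂ * b₂ := by rw [← map_mul]; exact hc
  obtain ⟨ha, hb⟩ := eq_and_eq_of_mul_eq_mul hnm (h₁.map (MulAut.conj c)) h₂
    (by rw [← map_pow, ha₁, map_one]) ha₂ (by rw [← map_pow, hb₁, map_one]) hb₂ hc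
  exact ⟨isConj_iff.mpr ⟨c, ha⟩, isConj_iff.mpr ⟨c, hb⟩⟩

end Commute

theorem not_realConj_mul_inv_mul_of_odd_card {G : Type*} [Group G] (hodd : Odd (Nat.card G))
    {v x : G} (hvx : Commute v x) (hco : (orderOf v).Coprime (orderOf x)) (hv : v ≠ 1)
    (hx : x ≠ 1) : ¬ realConj (v * x) (v⁻¹ * x) := by
  have hv₀ := pow_orderOf_eq_one v
  have hx₀ := pow_orderOf_eq_one x
  have hv₀' : v⁻¹ ^ orderOf v = 1 := by rw [inv_pow, hv₀, inv_one]
  have hx₀' : x⁻¹ ^ orderOf x = 1 := by rw [inv_pow, hx₀, inv_one]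
  rintro (h | h)
  · have hvv : IsConj v v⁻¹ :=
      (hvx.isConj_and_isConj_of_isConj_mul hco hvx.inv_left hv₀ hv₀' hx₀ hx₀ h).1
    exact hv (eq_one_of_isConj_inv_of_odd_card hodd hvv)
  · rw [hvx.mul_inv] at h
    have hxx : IsConj x⁻¹ x :=
      (hvx.inv_inv.isConj_and_isConj_of_isConj_mul hco hvx.inv_left hv₀' hv₀' hx₀' hx₀ h).2
    exact hx (inv_eq_one.mp (eq_one_of_isConj_inv_of_odd_card hodd (by rwa [inv_inv])))

theorem stmt5_general {G : Type*} [Group G] [Finite G] (hodd : Odd (Nat.card G))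
    (p q : ℕ) (hp : p.Prime) (hq : q.Prime) (hpq : p ≠ q)
    (P : Subgroup G) (hPp : IsPGroup p P)
    (x : G) (hxq : orderOf x = q)
    (hV : ∃ v ∈ P, v ≠ 1 ∧ Commute v x) :
    ¬ ∀ a b : G, orderOf a = p * q → orderOf b = p * q → realConj a b := by
  intro hall
  have := Fact.mk hp
  obtain ⟨v, hvP, hv1, hvx⟩ := hV
  have hpv : p ∣ orderOf v :=
    Subgroup.orderOf_mk v hvP ▸ hPp.dvd_orderOf (g := ⟨v, hvP⟩) (by simpa using hv1)
  set w := v ^ (orderOf v / p)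
  have hw : orderOf w = p := orderOf_pow_orderOf_div (orderOf_pos v).ne' hpv
  have hwx : Commute w x := hvx.pow_left _
  have hco : (orderOf w).Coprime (orderOf x) := hw ▸ hxq ▸ (Nat.coprime_primes hp hq).mpr hpq
  refine not_realConj_mul_inv_mul_of_odd_card hodd hwx hco
    (ne_of_apply_ne orderOf (by rw [hw, orderOf_one]; exact hp.ne_one))
    (ne_of_apply_ne orderOf (by rw [hxq, orderOf_one]; exact hq.ne_one)) (hall _ _ ?_ ?_)
  · rw [hwx.orderOf_mul_eq_mul_orderOf_of_coprime hco, hw, hxq]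
  · rw [hwx.inv_left.orderOf_mul_eq_mul_orderOf_of_coprime (by rwa [orderOf_inv]), orderOf_inv,
      hw, hxq]

theorem stmt5 {G : Type*} [Group G] [Finite G] (hodd : Odd (Nat.card G))
    (H : Subgroup G) [H.Normal] (p q : ℕ) (hp : p.Prime) (hq : q.Prime) (hpq : p ≠ q)
    (P : Subgroup G) [P.Normal] (hPH : P ≤ H) (hPp : IsPGroup p P)
    (hPab : ∀ a ∈ P, ∀ b ∈ P, a * b = b * a)
    (x : G) (hxH : x ∈ H) (hxq : orderOf x = q)
    (hV : ∃ v ∈ P, v ≠ 1 ∧ Commute v x) :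
    ¬ ∀ a b : G, orderOf a = p * q → orderOf b = p * q → realConj a b :=
  stmt5_general hodd p q hp hq hpq P hPp x hxq hV
end

section
/- Let m ≥ 3 be an integer and ε ∈ {1, −1}. Then 2^{2m+1} + ε·2^{m+1} + 1 is not a power of 5. -/
/-!
If `N = 2^(2m+1) + ε 2^(m+1) + 1 = 5^k`, then `2^(m+1) ∣ 5^k - 1`. By lifting the exponent,
`v₂(5^k - 1) = 2 + v₂(k)`, so `2^(m-1) ∣ k` and `5^k ≥ 5^(2^(m-1)) > 2^(2^m) ≥ 2^(2m+2)`,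
while `N < 2^(2m+2)`.
-/

theorem emultiplicity_two_five_pow_sub_one (k : ℕ) :
    emultiplicity 2 ((5 : ℤ) ^ k - 1) = 2 + emultiplicity (2 : ℤ) k := by
  rw [← one_pow k, Int.two_pow_sub_pow' k (by norm_num) (by decide),
    show (5 - 1 : ℤ) = 2 ^ 2 by norm_num, emultiplicity_pow_self_of_prime Int.prime_two]
  rfl

theorem two_pow_add_two_dvd_five_pow_sub_one_iff (n k : ℕ) :
    (2 : ℤ) ^ (n + 2) ∣ 5 ^ k - 1 ↔ 2 ^ n ∣ k := by
  rw [pow_dvd_iff_le_emultiplicity, emultiplicity_two_five_pow_sub_one, ← Int.natCast_dvd_natCast,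
    Nat.cast_pow, pow_dvd_iff_le_emultiplicity, Nat.cast_add, add_comm]
  exact WithTop.add_le_add_iff_left (by decide)

theorem two_mul_add_two_le_two_pow {m : ℕ} (hm : 3 ≤ m) : 2 * m + 2 ≤ 2 ^ m := by
  induction m, hm using Nat.le_induction with
  | base => norm_num
  | succ n _ ih => rw [pow_succ]; omega

theorem two_pow_two_mul_add_two_lt_five_pow_two_pow {m : ℕ} (hm : 3 ≤ m) :
    2 ^ (2 * m + 2) < 5 ^ 2 ^ (m - 1) :=
  calc 2 ^ (2 * m + 2) ≤ 2 ^ 2 ^ m := Nat.pow_le_pow_right two_pos (two_mul_add_two_le_two_pow hm)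
    _ = 4 ^ 2 ^ (m - 1) := by
      rw [show (4 : ℕ) = 2 ^ 2 by rfl, ← pow_mul, ← pow_succ', Nat.sub_add_cancel (by omega)]
    _ < 5 ^ 2 ^ (m - 1) := Nat.pow_lt_pow_left (by norm_num) (by positivity)

theorem two_pow_two_mul_add_one_add_mul_two_pow_succ_add_one_lt {m : ℕ} (hm : 1 ≤ m) {ε : ℤ}
    (hε : ε ≤ 1) : (2 : ℤ) ^ (2 * m + 1) + ε * 2 ^ (m + 1) + 1 < 2 ^ (2 * m + 2) := by
  have hε_mul : ε * 2 ^ (m + 1) ≤ 2 ^ (m + 1) :=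
    mul_le_of_le_one_left (by positivity) hε
  have hm_le : (2 : ℤ) ^ (m + 1) ≤ 2 ^ (2 * m) := pow_le_pow_right₀ (by norm_num) (by omega)
  have : (2 : ℤ) ^ (2 * m + 2) = 2 ^ (2 * m + 1) + 2 * 2 ^ (2 * m) := by ring
  have : (1 : ℤ) < 2 ^ (2 * m) := one_lt_pow₀ (by norm_num) (by omega)
  linarith

theorem stmt8 (m : ℕ) (hm : 3 ≤ m) (ε : ℤ) (hε : ε = 1 ∨ ε = -1) :
    ¬ ∃ k : ℕ, 1 ≤ k ∧ (2 : ℤ) ^ (2 * m + 1) + ε * 2 ^ (m + 1) + 1 = 5 ^ k := by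
  rintro ⟨k, hk, heq⟩
  have hdvd : (2 : ℤ) ^ (m - 1 + 2) ∣ 5 ^ k - 1 := by
    rw [← heq, show m - 1 + 2 = m + 1 by omega]
    exact ⟨2 ^ m + ε, by ring⟩
  have hk_ge : 2 ^ (m - 1) ≤ k :=
    Nat.le_of_dvd hk ((two_pow_add_two_dvd_five_pow_sub_one_iff _ _).mp hdvd)
  have h_lower : (2 : ℤ) ^ (2 * m + 2) < 5 ^ k := by
    exact_mod_cast (two_pow_two_mul_add_two_lt_five_pow_two_pow hm).trans_le
      (Nat.pow_le_pow_right (by norm_num) hk_ge)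
  have h_upper := two_pow_two_mul_add_one_add_mul_two_pow_succ_add_one_lt (by omega : 1 ≤ m)
    (by omega : ε ≤ 1)
  rw [heq] at h_upper
  exact h_upper.asymm h_lower
end

section
/- For a prime power q ≥ 5 with q ≡ ε (mod 4) where ε = ±1: if q is a Fermat or Mersenne prime with q > 17, then (q + ε)/2 is not a prime power. -/
lemma pow3_mod16 (m : ℕ) : (3 : ZMod 16) ^ m = 3 ^ (m % 4) := by
  conv_lhs => rw [← Nat.div_add_mod m 4, pow_add, pow_mul,
    show (3 : ZMod 16) ^ 4 = 1 by decide, one_pow, one_mul]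

theorem stmt9 (q : ℕ) (hq : q.Prime) (ε : ℤ) (hε : ε = 1 ∨ ε = -1)
    (hmod : (q : ℤ) % 4 = ε % 4)
    (hpow : ∃ k : ℕ, (q : ℤ) - ε = 2 ^ k) (h17 : 17 < q) :
    ¬ ∃ (r k : ℕ), r.Prime ∧ (q : ℤ) + ε = 2 * r ^ k := by
  rintro ⟨r, m, hr, heq⟩
  obtain ⟨k, hk⟩ := hpow
  have hεb : ε = 1 ∨ ε = -1 := hε
  -- k ≥ 5
  have hk5 : 5 ≤ k := by
    by_contra h
    push_neg at h
    interval_cases k <;> norm_num at hk <;> omega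
  -- 3 does not divide q - ε = 2^k
  have h3nd : ¬ (3 : ℤ) ∣ (q : ℤ) - ε := by
    rw [hk]
    intro h
    have := Int.prime_three.dvd_of_dvd_pow h
    norm_num at this
  -- 3 does not divide q
  have h3q : ¬ (3 : ℤ) ∣ (q : ℤ) := by
    intro h
    have h' : 3 ∣ q := by exact_mod_cast h
    have := (Nat.prime_dvd_prime_iff_eq (by norm_num) hq).mp h'
    omega
  -- hence 3 ∣ q + ε
  have e1 : ((q : ℤ) - ε) % 3 ≠ 0 := fun h => h3nd (Int.dvd_of_emod_eq_zero h)
  have e2 : (q : ℤ) % 3 ≠ 0 := fun h => h3q (Int.dvd_of_emod_eq_zero h)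
  have h3d : (3 : ℤ) ∣ (q : ℤ) + ε := by
    clear hmod hk heq hk5 h3nd h3q hε
    rcases hεb with rfl | rfl <;> omega
  -- so 3 ∣ r^m, hence r = 3
  have h3r : (3 : ℤ) ∣ (r : ℤ) ^ m := by
    have h2 : (3 : ℤ) ∣ 2 * (r : ℤ) ^ m := by
      rw [← heq]; exact_mod_cast h3d
    exact (Int.prime_three.dvd_mul.mp h2).resolve_left (by norm_num)
  have hr3 : r = 3 := by
    have h1 : (3 : ℤ) ∣ (r : ℤ) := Int.prime_three.dvd_of_dvd_pow h3r
    have h2 : 3 ∣ r := by exact_mod_cast h1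
    exact ((Nat.prime_dvd_prime_iff_eq (by norm_num) hr).mp h2).symm
  subst hr3
  -- m ≥ 1
  have hm1 : 1 ≤ m := by
    rcases Nat.eq_zero_or_pos m with rfl | h
    · simp at heq; rcases hεb with rfl | rfl <;> omega
    · omega
  -- rewrite k = j + 5 with j ≥ 0, so exponent k-1 = j+4
  obtain ⟨j, rfl⟩ : ∃ j, k = j + 5 := ⟨k - 5, by omega⟩
  -- key equation: 3^m = 2^(j+4) + ε
  have key : (3 : ℤ) ^ m = 2 ^ (j + 4) + ε := by
    have h2 : (2 : ℤ) ^ (j + 5) = 2 * 2 ^ (j + 4) := by ring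
    rw [h2] at hk
    push_cast at heq
    linarith
  -- reduce mod 16: 2^(j+4) = 0
  have h16 : (3 : ZMod 16) ^ m = (ε : ZMod 16) := by
    have := congrArg (Int.cast : ℤ → ZMod 16) key
    push_cast at this
    rw [this, pow_add, show (2 : ZMod 16) ^ 4 = 0 by decide, mul_zero, zero_add]
  rw [pow3_mod16] at h16
  have hmlt : m % 4 < 4 := Nat.mod_lt _ (by norm_num)
  rcases hεb with rfl | rfl
  · -- ε = 1 : 3^(m%4) = 1 mod 16 forces 4 ∣ m
    have hm4 : m % 4 = 0 := by
      push_cast at h16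
      interval_cases h : m % 4 <;> revert h16 <;> decide
    -- mod 5: 3^m = 1, so 2^(j+4) = 0 mod 5, contradiction
    have h5 : (3 : ZMod 5) ^ m = (2 : ZMod 5) ^ (j + 4) + 1 := by
      have := congrArg (Int.cast : ℤ → ZMod 5) key
      push_cast at this
      exact this
    obtain ⟨t, rfl⟩ : ∃ t, m = 4 * t := ⟨m / 4, by omega⟩
    have h31 : (3 : ZMod 5) ^ (4 * t) = 1 := by
      rw [pow_mul, show (3 : ZMod 5) ^ 4 = 1 by decide, one_pow]
    have h20 : (2 : ZMod 5) ≠ 0 := by decide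
    haveI : Fact (Nat.Prime 5) := ⟨by norm_num⟩
    have hz : (2 : ZMod 5) ^ (j + 4) ≠ 0 := pow_ne_zero _ h20
    rw [h31] at h5
    have : (2 : ZMod 5) ^ (j + 4) = 0 := by linear_combination -h5
    exact hz this
  · -- ε = -1 : 3^(m%4) = -1 mod 16, impossible
    push_cast at h16
    interval_cases h : m % 4 <;> revert h16 <;> decide
end

section
/- Let G be a finite group with a normal p-subgroup P for an odd prime p and a cyclic 2-subgroup T = ⟨t⟩ such that G = PT. Let U and V be nonzero real G-modules with U^G = V^G = 0. If U and V are isomorphic as P-modules, then det(t on U) = det(t on V). -/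
/-!
Split `U = U^P ⊕ U₁`, with `U₁` the kernel of the `P`-averaging projection. As `P` is normal,
both summands are `G`-stable, and after transporting `V` to `U` along the `P`-isomorphism they
are the same for `V`. On `U^P`, `t` has finite order and no fixed vector (it would be fixed by
`P ⊔ ⟨t⟩ = G`), so its real eigenvalues are all `-1` and its determinant is `(-1) ^ dim U^P` for
both representations. On `U₁` the operator `t_V t_U⁻¹` commutes with `P`, which fixes nothing
there, and such an operator has nonnegative determinant: on the generalized eigenspace of a
negative eigenvalue `P` still fixes nothing, and a representation of an odd `p`-group without
fixed vectors has even dimension (a nontrivial central element of its image has odd order, hence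
no real eigenvalue on a complement of its fixed space). So `det (t | U₁)` and `det (t | V₁)`,
both `±1`, agree.
-/

open Module LinearMap

theorem Polynomial.Monic.eval_pos_of_forall_isRoot_lt {p : Polynomial ℝ} (hp : p.Monic) {x : ℝ}
    (h : ∀ μ, p.IsRoot μ → μ < x) : 0 < p.eval x := by
  obtain ⟨y, hxy, hy⟩ : ∃ y, x ≤ y ∧ 0 < p.eval y := by
    rcases eq_or_ne p.natDegree 0 with h0 | h0
    · exact ⟨x, le_rfl, by simp [hp.natDegree_eq_zero.mp h0]⟩
    · have hlim := p.tendsto_atTop_of_leadingCoeff_nonneg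
        (natDegree_pos_iff_degree_pos.mp (Nat.pos_of_ne_zero h0)) (by simp [hp.leadingCoeff])
      exact ((hlim.eventually_gt_atTop 0).and (Filter.eventually_ge_atTop x)).exists.imp
        fun y hy => ⟨hy.2, hy.1⟩
  by_contra! hx
  obtain ⟨c, hc, hroot⟩ := intermediate_value_Icc hxy p.continuous.continuousOn ⟨hx, hy.le⟩
  exact (h c hroot).not_ge hc.1

theorem Commute.mapsTo_ker {R M : Type*} [CommSemiring R] [AddCommMonoid M] [Module R M]
    {f g : End R M} (h : Commute f g) : Set.MapsTo f (LinearMap.ker g) (LinearMap.ker g) :=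
  fun x hx => by
    rw [SetLike.mem_coe, LinearMap.mem_ker] at hx ⊢
    rw [← Module.End.mul_apply, ← h.eq, Module.End.mul_apply, hx, map_zero]

theorem Commute.mapsTo_range {R M : Type*} [CommSemiring R] [AddCommMonoid M] [Module R M]
    {f g : End R M} (h : Commute f g) : Set.MapsTo f (LinearMap.range g) (LinearMap.range g) := by
  rintro _ ⟨x, rfl⟩
  exact ⟨f x, by rw [← Module.End.mul_apply, ← h.eq, Module.End.mul_apply]⟩

namespace LinearMap

theorem det_neg {R M : Type*} [CommRing R] [AddCommGroup M] [Module R M] [Module.Free R M]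
    [Module.Finite R M] (f : End R M) :
    LinearMap.det (-f) = (-1) ^ finrank R M * LinearMap.det f := by
  rw [← neg_one_smul R f, det_smul]

theorem det_eq_det_restrict_mul_det_restrict {K V : Type*} [Field K] [AddCommGroup V]
    [Module K V] [FiniteDimensional K V] (f : End K V) {E F : Submodule K V} (hEF : IsCompl E F)
    (hE : Set.MapsTo f E E) (hF : Set.MapsTo f F F) :
    LinearMap.det f = LinearMap.det (f.restrict hE) * LinearMap.det (f.restrict hF) := by
  let e := Submodule.prodEquivOfIsCompl E F hEF
  have : e.symm.conj f = (f.restrict hE).prodMap (f.restrict hF) := by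
    ext x
    · simp [e, LinearEquiv.conj_apply, Submodule.projection_apply_of_mem_left _ (hE x.2)]; rfl
    · simp [e, LinearEquiv.conj_apply, Submodule.projection_apply_of_mem_right _ (hE x.2)]
    · simp [e, LinearEquiv.conj_apply, Submodule.projection_apply_of_mem_right _ (hF x.2)]
    · simp [e, LinearEquiv.conj_apply, Submodule.projection_apply_of_mem_left _ (hF x.2)]; rfl
  rw [← det_prodMap, ← this, LinearEquiv.conj_apply, comp_assoc, det_conj]

theorem det_eq_one_or_eq_neg_one_of_pow_eq_one {M : Type*} [AddCommGroup M] [Module ℝ M]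
    {f : End ℝ M} {n : ℕ} (hn : n ≠ 0) (hf : f ^ n = 1) :
    LinearMap.det f = 1 ∨ LinearMap.det f = -1 := by
  have : LinearMap.det f ^ n = 1 := by rw [← map_pow, hf, map_one]
  exact ((pow_eq_one_iff_cases.mp this).resolve_left hn).imp_right And.left

end LinearMap

theorem Module.End.HasEigenvalue.eq_one_or_eq_neg_one_of_pow_eq_one {M : Type*}
    [AddCommGroup M] [Module ℝ M] {f : End ℝ M} {μ : ℝ} (hμ : f.HasEigenvalue μ) {n : ℕ}
    (hn : n ≠ 0) (hf : f ^ n = 1) : μ = 1 ∨ μ = -1 := by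
  obtain ⟨v, hv⟩ := hμ.exists_hasEigenvector
  have hμn : μ ^ n • v = (1 : ℝ) • v := by rw [← hv.pow_apply, hf, one_smul, Module.End.one_apply]
  exact ((pow_eq_one_iff_cases.mp (smul_left_injective ℝ hv.2 hμn)).resolve_left hn).imp_right
    And.left

theorem Module.End.HasEigenvalue.exists_fittingDecomposition {K V : Type*} [Field K]
    [AddCommGroup V] [Module K V] [FiniteDimensional K V] {f : End K V} {μ : K}
    (hμ : f.HasEigenvalue μ) :
    ∃ E F : Submodule K V, IsCompl E F ∧ E ≠ ⊥ ∧
      (∀ g, Commute f g → Set.MapsTo g E E ∧ Set.MapsTo g F F) ∧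
      ∀ (hE : Set.MapsTo f E E) ν, Module.End.HasEigenvalue (f.restrict hE) ν → ν = μ := by
  set f' := f - μ • 1 with hf'
  obtain ⟨m, hm, hm1⟩ :=
    (f'.eventually_isCompl_ker_pow_range_pow.and (Filter.eventually_ge_atTop 1)).exists
  have hcomm : ∀ g, Commute f g → Commute g (f' ^ m) := fun g hg =>
    ((hg.sub_left ((Commute.one_left g).smul_left μ)).pow_left m).symm
  refine ⟨_, _, hm, fun hbot => ?_, fun g hg => ⟨(hcomm g hg).mapsTo_ker,
    (hcomm g hg).mapsTo_range⟩, fun hE ν hν => ?_⟩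
  · obtain ⟨v, hv⟩ := hμ.exists_hasEigenvector
    obtain ⟨m, rfl⟩ := Nat.exists_eq_add_of_le' hm1
    refine hv.2 ((Submodule.eq_bot_iff _).mp hbot v ?_)
    rw [LinearMap.mem_ker, pow_succ, Module.End.mul_apply, hf', LinearMap.sub_apply,
      hv.apply_eq_smul]
    simp
  · obtain ⟨w, hw⟩ := hν.exists_hasEigenvector
    have hf'w : f'.HasEigenvector (ν - μ) w := by
      refine ⟨Module.End.mem_eigenspace_iff.mpr ?_, by simpa using hw.2⟩
      simp [hf', sub_smul, show f w = ν • w from congrArg Subtype.val hw.apply_eq_smul]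
    have : (ν - μ) ^ m • (w : V) = 0 := by rw [← hf'w.pow_apply]; exact w.2
    have := (smul_eq_zero.mp this).resolve_right hf'w.2
    exact sub_eq_zero.mp ((pow_eq_zero_iff (by omega)).mp this)

namespace LinearMap

variable {W : Type*} [AddCommGroup W] [Module ℝ W] [FiniteDimensional ℝ W]

theorem det_neg_pos_of_forall_hasEigenvalue_neg (f : End ℝ W)
    (hf : ∀ μ, f.HasEigenvalue μ → μ < 0) : 0 < LinearMap.det (-f) := by
  simpa [eval_charpoly] using f.charpoly_monic.eval_pos_of_forall_isRoot_lt
    fun μ hμ => hf μ ((Module.End.hasEigenvalue_iff_isRoot_charpoly f μ).mpr hμ)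

theorem det_pos_of_forall_hasEigenvalue_pos (f : End ℝ W)
    (hf : ∀ μ, f.HasEigenvalue μ → 0 < μ) : 0 < LinearMap.det f := by
  simpa using det_neg_pos_of_forall_hasEigenvalue_neg (-f) fun μ hμ =>
    neg_pos.mp (hf _ (Module.End.hasEigenvalue_neg_iff.mp hμ))

theorem det_pos_of_even_finrank_of_forall_hasEigenvalue_neg (f : End ℝ W)
    (he : Even (finrank ℝ W)) (hf : ∀ μ, f.HasEigenvalue μ → μ < 0) : 0 < LinearMap.det f := by
  simpa [det_neg, he.neg_one_pow] using det_neg_pos_of_forall_hasEigenvalue_neg f hf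

theorem det_eq_neg_one_pow_finrank_of_pow_eq_one {f : End ℝ W} {n : ℕ} (hn : n ≠ 0)
    (hf : f ^ n = 1) (h1 : ¬ f.HasEigenvalue 1) :
    LinearMap.det f = (-1) ^ finrank ℝ W := by
  have hneg : ∀ μ, f.HasEigenvalue μ → μ < 0 := fun μ hμ => by
    rcases hμ.eq_one_or_eq_neg_one_of_pow_eq_one hn hf with rfl | rfl
    exacts [absurd hμ h1, neg_one_lt_zero]
  have hpos := det_neg_pos_of_forall_hasEigenvalue_neg f hneg
  rw [det_neg] at hpos
  rcases det_eq_one_or_eq_neg_one_of_pow_eq_one hn hf with h | h <;>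
  rcases neg_one_pow_eq_or ℝ (finrank ℝ W) with h' | h' <;>
    simp only [h, h'] at hpos ⊢ <;> norm_num at hpos

theorem even_finrank_of_pow_eq_one_of_odd {f : End ℝ W} {n : ℕ} (hn : Odd n)
    (hf : f ^ n = 1) (h1 : ¬ f.HasEigenvalue 1) : Even (finrank ℝ W) := by
  have hdet : LinearMap.det f = 1 := by
    have : LinearMap.det f ^ n = 1 := by rw [← map_pow, hf, map_one]
    simpa [pow_eq_one_iff_cases, hn.pos.ne', Nat.not_even_iff_odd.mpr hn] using this
  rw [det_eq_neg_one_pow_finrank_of_pow_eq_one hn.pos.ne' hf h1] at hdet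
  exact (neg_one_pow_eq_one_iff_even (by norm_num)).mp hdet

end LinearMap

theorem IsPGroup.exists_map_ne_one_forall_commute {H M : Type*} [Group H] [Finite H] [Monoid M]
    {p : ℕ} [Fact p.Prime] (hH : IsPGroup p H) {φ : H →* M} (hφ : φ ≠ 1) :
    ∃ h₀, φ h₀ ≠ 1 ∧ ∀ h, Commute (φ h₀) (φ h) := by
  let ψ := φ.toHomUnits
  have hQ : IsPGroup p ψ.range := hH.of_surjective ψ.rangeRestrict ψ.rangeRestrict_surjective
  have : Nontrivial ψ.range := by
    obtain ⟨h, hh⟩ : ∃ h, φ h ≠ 1 := by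
      by_contra! h; exact hφ (MonoidHom.ext h)
    refine ⟨⟨ψ.rangeRestrict h, 1, fun e => hh ?_⟩⟩
    simpa [ψ, Units.ext_iff] using congrArg (fun u : ψ.range => ((u : Mˣ) : M)) e
  have : Finite ψ.range := Set.finite_range ψ |>.to_subtype
  have := hQ.center_nontrivial
  obtain ⟨⟨⟨z, h₀, rfl⟩, hz⟩, hz1⟩ := exists_ne (1 : Subgroup.center ψ.range)
  refine ⟨h₀, fun e => hz1 ?_, fun h => ?_⟩
  · ext; simpa [ψ] using e
  · have := congrArg (fun u : ψ.range => ((u : Mˣ) : M))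
      (Subgroup.mem_center_iff.mp hz ⟨ψ h, h, rfl⟩)
    exact (by simpa [ψ] using this.symm : φ h₀ * φ h = φ h * φ h₀)

namespace Representation

section Stabilizer

variable {k G V : Type*} [CommRing k] [Group G] [AddCommGroup V] [Module k V]
  (ρ : Representation k G V)

def stabilizer (v : V) : Subgroup G where
  carrier := {g | ρ g v = v}
  one_mem' := by simp
  mul_mem' {a b} ha hb := by simp_all [Module.End.mul_apply]
  inv_mem' {g} hg := by
    simp only [Set.mem_ofPred_eq] at hg ⊢
    conv_lhs => rw [← hg]
    rw [← Module.End.mul_apply, ← map_mul, inv_mul_cancel, map_one, Module.End.one_apply]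

theorem mem_stabilizer {v : V} {g : G} : g ∈ ρ.stabilizer v ↔ ρ g v = v := Iff.rfl

theorem mem_invariants_comp_subtype_iff (S : Subgroup G) (v : V) :
    v ∈ invariants (ρ.comp S.subtype) ↔ S ≤ ρ.stabilizer v :=
  ⟨fun hv g hg => hv ⟨g, hg⟩, fun hS g => hS g.2⟩

theorem mem_invariants_iff_stabilizer_eq_top (v : V) :
    v ∈ ρ.invariants ↔ ρ.stabilizer v = ⊤ :=
  ⟨fun hv => eq_top_iff.mpr fun g _ => hv g,
    fun hv g => ρ.mem_stabilizer.mp (hv ▸ Subgroup.mem_top g)⟩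

theorem mem_invariants_of_sup_zpowers_eq_top {P : Subgroup G} {t : G}
    (hgen : P ⊔ Subgroup.zpowers t = ⊤) {v : V} (hP : v ∈ invariants (ρ.comp P.subtype))
    (ht : ρ t v = v) : v ∈ ρ.invariants := by
  rw [mem_invariants_iff_stabilizer_eq_top, eq_top_iff, ← hgen]
  exact sup_le ((mem_invariants_comp_subtype_iff ρ P v).mp hP) (Subgroup.zpowers_le.mpr ht)

end Stabilizer

theorem invariants_subrepresentation_eq_bot {k G V : Type*} [CommRing k] [Group G]
    [AddCommGroup V] [Module k V] {ρ : Representation k G V} (hρ : ρ.invariants = ⊥)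
    (E : Submodule k V) (hE : ∀ g, E ≤ E.comap (ρ g)) :
    (ρ.subrepresentation E hE).invariants = ⊥ := by
  refine (Submodule.eq_bot_iff _).mpr fun v hv => Subtype.ext ?_
  have : (v : V) ∈ ρ.invariants := fun g => congrArg Subtype.val (hv g)
  rwa [hρ, Submodule.mem_bot] at this

section Average

variable {k K V : Type*} [Field k] [Group K] [Fintype K] [Invertible (Fintype.card K : k)]
  [AddCommGroup V] [Module k V] (σ : Representation k K V)

theorem averageMap_eq_smul_sum : σ.averageMap = ⅟(Fintype.card K : k) • ∑ x, σ x := by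
  simp [averageMap, GroupAlgebra.average, map_sum]

theorem commute_averageMap_of_mul_eq {f : End k V} (φ : K ≃ K)
    (hf : ∀ x, f * σ x = σ (φ x) * f) : Commute f σ.averageMap := by
  rw [averageMap_eq_smul_sum, Commute, SemiconjBy, mul_smul_comm, smul_mul_assoc,
    Finset.mul_sum, Finset.sum_mul]
  simp_rw [hf]
  rw [φ.sum_comp (fun y => σ y * f)]

theorem commute_averageMap_of_forall_commute {f : End k V} (hf : ∀ x, Commute f (σ x)) :
    Commute f σ.averageMap :=
  σ.commute_averageMap_of_mul_eq (_root_.Equiv.refl K) fun x => (hf x).eq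

end Average

theorem le_comap_ker_averageMap {k G V : Type*} [Field k] [Group G] [AddCommGroup V]
    [Module k V] (ρ : Representation k G V) (P : Subgroup G) [P.Normal] [Fintype P]
    [Invertible (Fintype.card P : k)] (g : G) :
    LinearMap.ker (averageMap (ρ.comp P.subtype)) ≤
      (LinearMap.ker (averageMap (ρ.comp P.subtype))).comap (ρ g) :=
  Commute.mapsTo_ker <| commute_averageMap_of_mul_eq (ρ.comp P.subtype)
    (MulAut.conjNormal g).toEquiv fun x => by simp [← map_mul, mul_assoc]

section PGroup

variable {H W : Type*} [Group H] [Finite H] [AddCommGroup W] [Module ℝ W] [FiniteDimensional ℝ W]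
  {p : ℕ} [Fact p.Prime]

theorem even_finrank_of_invariants_eq_bot (hodd : Odd p) (hH : IsPGroup p H)
    (ρ : Representation ℝ H W) (hρ : ρ.invariants = ⊥) : Even (finrank ℝ W) := by
  induction hn : finrank ℝ W using Nat.strong_induction_on generalizing W with
  | _ n ih =>
  subst hn
  by_cases htriv : ρ = 1
  · have : (⊤ : Submodule ℝ W) = ⊥ := by
      rw [← hρ, eq_comm, eq_top_iff]; intro v _ g; simp [htriv]
    rw [← finrank_top ℝ W, this, finrank_bot]; exact ⟨0, rfl⟩
  -- split `W` into the fixed space `E` of the central `ρ h₀ ≠ 1` and a stable complement `F`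
  obtain ⟨h₀, hne, hcomm⟩ := hH.exists_map_ne_one_forall_commute htriv
  let K := Subgroup.zpowers h₀
  let σ : Representation ℝ K W := ρ.comp K.subtype
  have := Fintype.ofFinite K
  have : Invertible (Fintype.card K : ℝ) := invertibleOfNonzero (by positivity)
  have hcommσ : ∀ h, Commute (ρ h) σ.averageMap := fun h =>
    σ.commute_averageMap_of_forall_commute fun ⟨x, hx⟩ => by
      obtain ⟨n, rfl⟩ := mem_powers_iff_mem_zpowers.mpr hx
      change Commute (ρ h) (ρ (h₀ ^ n))
      rw [map_pow]
      exact ((hcomm h).pow_left n).symm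
  set E := invariants σ
  set F := LinearMap.ker σ.averageMap
  have hEF : IsCompl E F := σ.isProj_averageMap.isCompl
  have hE : ∀ h, E ≤ E.comap (ρ h) := fun h => by
    have hrange : LinearMap.range σ.averageMap = E := σ.isProj_averageMap.range
    rw [← hrange]; exact (hcommσ h).mapsTo_range
  have hF : ∀ h, F ≤ F.comap (ρ h) := fun h => (hcommσ h).mapsTo_ker
  have hE_even : Even (finrank ℝ E) := by
    refine ih _ (Submodule.finrank_lt fun hEtop => hne ?_) _
      (invariants_subrepresentation_eq_bot hρ E hE) rfl
    ext v
    have hv : v ∈ E := hEtop ▸ Submodule.mem_top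
    exact (mem_invariants_comp_subtype_iff ρ K v).mp hv (Subgroup.mem_zpowers h₀)
  have hF_even : Even (finrank ℝ F) := by
    obtain ⟨k, hk⟩ := IsPGroup.iff_orderOf.mp hH h₀
    refine even_finrank_of_pow_eq_one_of_odd (f := ρ.subrepresentation F hF h₀)
      (n := orderOf h₀) (hk ▸ hodd.pow) (by rw [← map_pow, pow_orderOf_eq_one, map_one])
      fun h1 => ?_
    obtain ⟨w, hw⟩ := h1.exists_hasEigenvector
    have hwE : (w : W) ∈ E := (mem_invariants_comp_subtype_iff ρ K w).mpr
      (Subgroup.zpowers_le.mpr (ρ.mem_stabilizer.mpr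
        (by simpa using congrArg Subtype.val hw.apply_eq_smul)))
    exact hw.2 (Subtype.ext (Submodule.disjoint_def.mp hEF.disjoint _ hwE w.2))
  rw [← Submodule.finrank_add_eq_of_isCompl hEF]
  exact hE_even.add hF_even

theorem det_nonneg_of_forall_commute (hodd : Odd p) (hH : IsPGroup p H)
    (ρ : Representation ℝ H W) (hρ : ρ.invariants = ⊥) (C : End ℝ W)
    (hC : ∀ h, Commute C (ρ h)) : 0 ≤ LinearMap.det C := by
  induction hn : finrank ℝ W using Nat.strong_induction_on generalizing W with
  | _ n ih =>
  subst hn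
  by_cases hμ : ∃ μ, C.HasEigenvalue μ
  swap
  · push Not at hμ
    exact (det_pos_of_forall_hasEigenvalue_pos C fun μ h => absurd h (hμ μ)).le
  obtain ⟨μ, hμ⟩ := hμ
  rcases eq_or_ne μ 0 with rfl | hμ0
  · exact (((LinearMap.hasEigenvalue_zero_tfae C).out 0 3).mp hμ :).ge
  obtain ⟨E, F, hEF, hE_ne, hstable, hE_eig⟩ := hμ.exists_fittingDecomposition
  have hCE := (hstable C (Commute.refl C)).1
  have hCF := (hstable C (Commute.refl C)).2
  have hρE : ∀ h, E ≤ E.comap (ρ h) := fun h => (hstable _ (hC h)).1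
  have hρF : ∀ h, F ≤ F.comap (ρ h) := fun h => (hstable _ (hC h)).2
  -- for `μ < 0` the sign is saved by `dim E` being even, as `H` fixes no vector of `E`
  have hE_pos : 0 < LinearMap.det (C.restrict hCE) := by
    rcases hμ0.lt_or_gt with hneg | hpos
    · exact det_pos_of_even_finrank_of_forall_hasEigenvalue_neg _
        (even_finrank_of_invariants_eq_bot hodd hH _ (invariants_subrepresentation_eq_bot hρ E hρE))
        fun ν hν => hE_eig hCE ν hν ▸ hneg
    · exact det_pos_of_forall_hasEigenvalue_pos _ fun ν hν => hE_eig hCE ν hν ▸ hpos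
  have hF_lt : finrank ℝ F < finrank ℝ W := Submodule.finrank_lt fun hFtop => hE_ne <| by
    rw [← inf_top_eq E, ← hFtop]; exact hEF.inf_eq_bot
  rw [det_eq_det_restrict_mul_det_restrict C hEF hCE hCF]
  exact mul_nonneg hE_pos.le (ih _ hF_lt (ρ.subrepresentation F hρF)
    (invariants_subrepresentation_eq_bot hρ F hρF) (C.restrict hCF)
    (fun h => LinearMap.restrict_commute (hC h) hCF (hρF h)) rfl)

end PGroup

variable {G W : Type*} [Group G] [Finite G] [AddCommGroup W] [Module ℝ W] [FiniteDimensional ℝ W]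

theorem det_apply_eq_neg_one_pow_mul_det_subrepresentation (ρ : Representation ℝ G W)
    (hρ : ρ.invariants = ⊥) {P : Subgroup G} [P.Normal] {t : G}
    (hgen : P ⊔ Subgroup.zpowers t = ⊤) {F : Submodule ℝ W}
    (hF : IsCompl (invariants (ρ.comp P.subtype)) F) (hFρ : ∀ g, F ≤ F.comap (ρ g)) :
    LinearMap.det (ρ t) = (-1) ^ finrank ℝ (invariants (ρ.comp P.subtype)) *
      LinearMap.det (ρ.subrepresentation F hFρ t) := by
  rw [det_eq_det_restrict_mul_det_restrict (ρ t) hF (le_comap_invariants ρ P t) (hFρ t)]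
  congr 1
  change LinearMap.det (ρ.toInvariants P t) = _
  refine det_eq_neg_one_pow_finrank_of_pow_eq_one (orderOf_pos t).ne'
    (by rw [← map_pow, pow_orderOf_eq_one, map_one]) fun h1 => ?_
  obtain ⟨w, hw⟩ := h1.exists_hasEigenvector
  have hw' : (w : W) ∈ ρ.invariants := mem_invariants_of_sup_zpowers_eq_top ρ hgen w.2
    (by simpa using congrArg Subtype.val hw.apply_eq_smul)
  rw [hρ, Submodule.mem_bot] at hw'
  exact hw.2 (Subtype.ext hw')

variable {p : ℕ} [Fact p.Prime]

theorem det_apply_eq_of_comp_subtype_eq (hodd : Odd p) {P : Subgroup G} [P.Normal]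
    (hP : IsPGroup p P) {ρ σ : Representation ℝ G W}
    (hρσ : σ.comp P.subtype = ρ.comp P.subtype) (hρ : invariants (ρ.comp P.subtype) = ⊥)
    (g : G) : LinearMap.det (ρ g) = LinearMap.det (σ g) := by
  have hPσ : ∀ x ∈ P, σ x = ρ x := fun x hx => congrArg (· ⟨x, hx⟩) hρσ
  -- `σ g` and `ρ g` conjugate `P` in the same way, so `σ g * ρ g⁻¹` centralizes it
  have hC : ∀ x : P, Commute (σ g * ρ g⁻¹) (ρ.comp P.subtype x) := fun ⟨x, hx⟩ => by
    have hx' : g⁻¹ * x * g ∈ P := by simpa using Subgroup.Normal.conj_mem ‹_› x hx g⁻¹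
    change σ g * ρ g⁻¹ * ρ x = ρ x * (σ g * ρ g⁻¹)
    calc σ g * ρ g⁻¹ * ρ x = σ g * ρ (g⁻¹ * x * g) * ρ g⁻¹ := by
          simp only [← map_mul, mul_assoc, mul_inv_cancel, mul_one]
      _ = σ g * σ (g⁻¹ * x * g) * ρ g⁻¹ := by rw [hPσ _ hx']
      _ = σ (x * g) * ρ g⁻¹ := by simp only [← map_mul, ← mul_assoc, mul_inv_cancel, one_mul]
      _ = ρ x * (σ g * ρ g⁻¹) := by rw [map_mul, hPσ x hx, mul_assoc]
  have hdet := det_nonneg_of_forall_commute hodd hP _ hρ _ hC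
  rw [map_mul] at hdet
  have hinv : LinearMap.det (ρ g) * LinearMap.det (ρ g⁻¹) = 1 := by
    rw [← map_mul, ← map_mul, mul_inv_cancel, map_one, map_one]
  have hfin : ∀ τ : Representation ℝ G W, τ g ^ orderOf g = 1 := fun τ => by
    rw [← map_pow, pow_orderOf_eq_one, map_one]
  rcases det_eq_one_or_eq_neg_one_of_pow_eq_one (orderOf_pos g).ne' (hfin ρ) with h | h <;>
  rcases det_eq_one_or_eq_neg_one_of_pow_eq_one (orderOf_pos g).ne' (hfin σ) with h' | h' <;>
    simp only [h, h'] at hinv hdet ⊢ <;> linarith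

theorem det_apply_eq_of_comp_subtype_eq_of_sup_zpowers_eq_top (hodd : Odd p) {P : Subgroup G}
    [P.Normal] (hP : IsPGroup p P) {t : G} (hgen : P ⊔ Subgroup.zpowers t = ⊤)
    {ρ σ : Representation ℝ G W} (hρ : ρ.invariants = ⊥) (hσ : σ.invariants = ⊥)
    (hρσ : σ.comp P.subtype = ρ.comp P.subtype) :
    LinearMap.det (ρ t) = LinearMap.det (σ t) := by
  have := Fintype.ofFinite P
  have : Invertible (Fintype.card P : ℝ) := invertibleOfNonzero (by positivity)
  set F := LinearMap.ker (averageMap (ρ.comp P.subtype))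
  have hF : IsCompl (invariants (ρ.comp P.subtype)) F := (isProj_averageMap _).isCompl
  have hFρ := le_comap_ker_averageMap ρ P
  have hFσ : ∀ g, F ≤ F.comap (σ g) := by
    simpa only [hρσ] using le_comap_ker_averageMap σ P
  have hFP : invariants ((ρ.subrepresentation F hFρ).comp P.subtype) = ⊥ := by
    refine (Submodule.eq_bot_iff _).mpr fun v hv => Subtype.ext ?_
    exact Submodule.disjoint_def.mp hF.disjoint _ (fun x => congrArg Subtype.val (hv x)) v.2
  have hFρσ : (σ.subrepresentation F hFσ).comp P.subtype =
      (ρ.subrepresentation F hFρ).comp P.subtype := by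
    ext x v
    exact congrArg (fun τ : Representation ℝ P W => τ x v) hρσ
  have hσ_split := det_apply_eq_neg_one_pow_mul_det_subrepresentation σ hσ hgen (hρσ ▸ hF) hFσ
  rw [hρσ] at hσ_split
  rw [det_apply_eq_neg_one_pow_mul_det_subrepresentation ρ hρ hgen hF hFρ, hσ_split,
    det_apply_eq_of_comp_subtype_eq hodd hP hFρσ hFP]

end Representation

theorem stmt16_general {G : Type*} [Group G] [Finite G] (p : ℕ) (hp : p.Prime) (hodd : Odd p)
    (P : Subgroup G) [P.Normal] (hP : IsPGroup p P)
    (t : G)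
    (hgen : P ⊔ Subgroup.zpowers t = ⊤)
    {U V : Type*} [AddCommGroup U] [Module ℝ U] [FiniteDimensional ℝ U]
    [AddCommGroup V] [Module ℝ V]
    (ρU : Representation ℝ G U) (ρV : Representation ℝ G V)
    (hUG : ∀ u : U, (∀ g : G, ρU g u = u) → u = 0)
    (hVG : ∀ v : V, (∀ g : G, ρV g v = v) → v = 0)
    (hiso : ∃ e : U ≃ₗ[ℝ] V, ∀ g ∈ P, ∀ u : U, e (ρU g u) = ρV g (e u)) :
    LinearMap.det (ρU t) = LinearMap.det (ρV t) := by
  have := Fact.mk hp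
  obtain ⟨e, he⟩ := hiso
  let σ : Representation ℝ G U := (e.symm.conjAlgEquiv ℝ).toMonoidHom.comp ρV
  have hσ : ∀ g, σ g = e.symm ∘ₗ ρV g ∘ₗ e := fun g => by ext; simp [σ]
  have hσP : σ.comp P.subtype = ρU.comp P.subtype := by
    ext x u; simp [hσ, ← he x x.2]
  have hσ_inv : σ.invariants = ⊥ := by
    refine (Submodule.eq_bot_iff _).mpr fun u hu => e.map_eq_zero_iff.mp (hVG _ fun g => ?_)
    simpa [hσ, e.symm_apply_eq] using hu g
  rw [← LinearMap.det_conj (ρV t) e.symm, e.symm_symm, ← hσ]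
  exact Representation.det_apply_eq_of_comp_subtype_eq_of_sup_zpowers_eq_top hodd hP hgen
    ((Submodule.eq_bot_iff _).mpr hUG) hσ_inv hσP

theorem stmt16 {G : Type*} [Group G] [Finite G] (p : ℕ) (hp : p.Prime) (hodd : Odd p)
    (P : Subgroup G) [P.Normal] (hP : IsPGroup p P)
    (t : G) (ht : ∃ k : ℕ, orderOf t = 2 ^ k)
    (hgen : P ⊔ Subgroup.zpowers t = ⊤)
    {U V : Type*} [AddCommGroup U] [Module ℝ U] [FiniteDimensional ℝ U]
    [AddCommGroup V] [Module ℝ V] [FiniteDimensional ℝ V]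
    [Nontrivial U] [Nontrivial V]
    (ρU : Representation ℝ G U) (ρV : Representation ℝ G V)
    (hUG : ∀ u : U, (∀ g : G, ρU g u = u) → u = 0)
    (hVG : ∀ v : V, (∀ g : G, ρV g v = v) → v = 0)
    (hiso : ∃ e : U ≃ₗ[ℝ] V, ∀ g ∈ P, ∀ u : U, e (ρU g u) = ρV g (e u)) :
    LinearMap.det (ρU t) = LinearMap.det (ρV t) :=
  stmt16_general p hp hodd P hP t hgen ρU ρV hUG hVG hiso
end
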